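/- Observation-preserving corruption preserves salient support: let E be a finite set of propositional formulas, and let c and c† be claims with the same salient constraint c* and suppose some e ∈ E entails c*. Suppose further that E is consistent and some S₂ ⊆ E entails ¬c_j for some non-salient constraint c_j of c† (while every constraint of c is entailed by some subset of E). Then: CWA(c,E) = Accept, CWA(c†,E) = Reject, V_s(c,E) = V_s(c†,E) = Accept. Hence the pair (c, c†) witnesses that V_s and CWA are extensionally different procedures on evidence E. -/
import Mathlib


/-- Semantic entailment: a finite set `S` of propositional formulas (modeled as
predicates on valuations of type `V`) entails `φ` iff every valuation satisfying
all of `S` satisfies `φ`. -/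
def Entails {V : Type*} (S : Finset (V → Prop)) (φ : V → Prop) : Prop :=
  ∀ v : V, (∀ ψ ∈ S, ψ v) → φ v

/-- `E` is consistent iff some valuation satisfies every formula of `E`. -/
def Consistent {V : Type*} (E : Finset (V → Prop)) : Prop :=
  ∃ v : V, ∀ ψ ∈ E, ψ v

/-- Observation-preserving corruption separates V_s from CWA: the original
claim (salient cstar, non-salient set N) is CWA-accepted, the corrupted claim
(same salient, non-salient set N†) is CWA-rejected, yet V_s accepts both. -/
theorem corruption_separates_vs_from_cwa {V : Type*}
    (E : Finset (V → Prop)) (cstar : V → Prop)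
    (N Ndag : Finset (V → Prop))
    (hE : Consistent E)
    (he : ∃ e ∈ E, Entails {e} cstar)
    (hcwa : ∀ ci ∈ N, ∃ S ⊆ E, Entails S ci)
    (hviol : ∃ cj ∈ Ndag, cj ≠ cstar ∧ ∃ S ⊆ E, Entails S (fun v => ¬ cj v)) :
    ((∃ S ⊆ E, Entails S cstar) ∧ ∀ ci ∈ N, ∃ S ⊆ E, Entails S ci) ∧
    ¬ ((∃ S ⊆ E, Entails S cstar) ∧ ∀ ci ∈ Ndag, ∃ S ⊆ E, Entails S ci) ∧
    (∃ e ∈ E, Entails {e} cstar) ∧ (∃ e ∈ E, Entails {e} cstar) := by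
  obtain ⟨e, heE, hent⟩ := he
  have hsal : ∃ S ⊆ E, Entails S cstar := by
    refine ⟨{e}, Finset.singleton_subset_iff.mpr heE, hent⟩
  refine ⟨⟨hsal, hcwa⟩, ?_, ⟨e, heE, hent⟩, ⟨e, heE, hent⟩⟩
  rintro ⟨-, hall⟩
  obtain ⟨cj, hcj, -, S', hS'E, hS'⟩ := hviol
  obtain ⟨S, hSE, hS⟩ := hall cj hcj
  obtain ⟨v, hv⟩ := hE
  exact hS' v (fun ψ hψ => hv ψ (hS'E hψ)) (hS v (fun ψ hψ => hv ψ (hSE hψ)))
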